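/- arXiv:2306.04029 — 4 statements merged into one kernel-verified Lean document; each statement's English description precedes it below -/
import Mathlib

section
/- For every integer k ≥ 4, every 2-coloring of the set A = {1, 2, 3, k+1, k+2, 2(k+1), 2(k+2), 3k, k(k+1), k(k+2), 2k(k+1), 2k(k+2)} admits a monochromatic solution to the equation x₁ + x₂ + ⋯ + x_k = y, i.e., there exist a₁, …, a_k, b ∈ A (not necessarily distinct) all of the same color with a₁ + ⋯ + a_k = b. -/
lemma schur_sum_piece (lo hi v : ℕ) (f : ℕ → ℕ) (hf : ∀ i, lo ≤ i → i < hi → f i = v) :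
    ∑ i ∈ Finset.Ico lo hi, f i = (hi - lo) * v := by
  rw [Finset.sum_congr rfl (fun i hi' => hf i (Finset.mem_Ico.mp hi').1 (Finset.mem_Ico.mp hi').2)]
  simp [mul_comm]

lemma schur_sum3 (k m n a b c : ℕ) (h : m + n ≤ k) :
    (∑ i : Fin k, (if (i : ℕ) < m then a else if (i : ℕ) < m + n then b else c))
      = m * a + n * b + (k - m - n) * c := by
  rw [Fin.sum_univ_eq_sum_range (fun i => if i < m then a else if i < m + n then b else c)]
  rw [Finset.range_eq_Ico,
    ← Finset.sum_Ico_consecutive _ (Nat.zero_le (m+n)) h,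
    ← Finset.sum_Ico_consecutive _ (Nat.zero_le m) (Nat.le_add_right m n)]
  rw [schur_sum_piece 0 m a _ (fun i _ h2 => by rw [if_pos h2]),
    schur_sum_piece m (m+n) b _ (fun i h1 h2 => by rw [if_neg (by omega), if_pos h2]),
    schur_sum_piece (m+n) k c _ (fun i h1 h2 => by rw [if_neg (by omega), if_neg (by omega)])]
  rw [Nat.sub_zero, Nat.add_sub_cancel_left, Nat.sub_sub]

lemma schur_fin2 (a b c : Fin 2) (h1 : a ≠ b) (h2 : c ≠ a) : c = b := by
  revert h1 h2; revert a b c; decide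

lemma schur_aux (k m n a b c y : ℕ) (Δ : ℕ → Fin 2) (S : Finset ℕ)
    (hmn : m + n ≤ k)
    (ha : a ∈ S) (hb : b ∈ S) (hc : c ∈ S) (hy : y ∈ S)
    (hca : Δ a = Δ y) (hcb : Δ b = Δ y) (hcc : Δ c = Δ y)
    (hsum : m * a + n * b + (k - m - n) * c = y) :
    ∃ (x : Fin k → ℕ) (y' : ℕ),
      (∀ i, x i ∈ S) ∧ y' ∈ S ∧ (∀ i, Δ (x i) = Δ y') ∧ ∑ i, x i = y' := by
  refine ⟨fun i => if (i : ℕ) < m then a else if (i : ℕ) < m + n then b else c, y,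
    ?_, hy, ?_, ?_⟩
  · intro i; dsimp only; split_ifs <;> assumption
  · intro i; dsimp only; split_ifs <;> assumption
  · rw [schur_sum3 k m n a b c hmn]; exact hsum

set_option maxHeartbeats 1600000 in
theorem stmt_0 (k : ℕ) (hk : 4 ≤ k) (Δ : ℕ → Fin 2) :
    ∃ (x : Fin k → ℕ) (y : ℕ),
      (∀ i, x i ∈ ({1, 2, 3, k+1, k+2, 2*(k+1), 2*(k+2), 3*k,
        k*(k+1), k*(k+2), 2*k*(k+1), 2*k*(k+2)} : Finset ℕ)) ∧
      y ∈ ({1, 2, 3, k+1, k+2, 2*(k+1), 2*(k+2), 3*k,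
        k*(k+1), k*(k+2), 2*k*(k+1), 2*k*(k+2)} : Finset ℕ) ∧
      (∀ i, Δ (x i) = Δ y) ∧ ∑ i, x i = y := by
  by_cases h2 : Δ 2 = Δ 1
  · -- 1 and 2 same color
    by_cases hk1 : Δ (k+1) = Δ 1
    · -- S1: (k-1)·1 + 2 = k+1
      exact schur_aux k 1 0 2 1 1 (k+1) Δ _ (by omega) (by simp) (by simp) (by simp) (by simp)
        (h2.trans hk1.symm) hk1.symm hk1.symm (by omega)
    by_cases hk2 : Δ (k+2) = Δ 1
    · -- S2: (k-2)·1 + 2·2 = k+2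
      exact schur_aux k 2 0 2 1 1 (k+2) Δ _ (by omega) (by simp) (by simp) (by simp) (by simp)
        (h2.trans hk2.symm) hk2.symm hk2.symm (by omega)
    by_cases hp1 : Δ (k*(k+1)) = Δ (k+1)
    · -- S5: k·(k+1) = k(k+1)
      exact schur_aux k 0 0 (k+1) (k+1) (k+1) (k*(k+1)) Δ _ (by omega) (by simp) (by simp)
        (by simp) (by simp) hp1.symm hp1.symm hp1.symm (by simp)
    by_cases hp2 : Δ (k*(k+2)) = Δ (k+2)
    · -- S6: k·(k+2) = k(k+2)
      exact schur_aux k 0 0 (k+2) (k+2) (k+2) (k*(k+2)) Δ _ (by omega) (by simp) (by simp)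
        (by simp) (by simp) hp2.symm hp2.symm hp2.symm (by simp)
    · -- S12: k(k+1) + 2 + (k-2)·1 = k(k+2), all colored Δ 1
      have e1 : Δ (k*(k+1)) = Δ 1 := schur_fin2 _ _ _ hk1 hp1
      have e2 : Δ (k*(k+2)) = Δ 1 := schur_fin2 _ _ _ hk2 hp2
      refine schur_aux k 1 1 (k*(k+1)) 2 1 (k*(k+2)) Δ _ (by omega) (by simp) (by simp)
        (by simp) (by simp) (e1.trans e2.symm) (h2.trans e2.symm) e2.symm ?_
      obtain ⟨m, rfl⟩ : ∃ m, k = m + 2 := ⟨k - 2, by omega⟩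
      simp [Nat.add_sub_cancel]
      ring
  · -- 1 and 2 different colors
    by_cases h3 : Δ 3 = Δ 1
    · -- 3 colored like 1
      by_cases hK2 : Δ (k+2) = Δ 1
      · -- S3: (k-1)·1 + 3 = k+2
        exact schur_aux k 1 0 3 1 1 (k+2) Δ _ (by omega) (by simp) (by simp) (by simp) (by simp)
          (h3.trans hK2.symm) hK2.symm hK2.symm (by omega)
      by_cases h3k : Δ (3*k) = Δ 1
      · -- S4: k·3 = 3k
        exact schur_aux k 0 0 3 3 3 (3*k) Δ _ (by omega) (by simp) (by simp) (by simp) (by simp)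
          (h3.trans h3k.symm) (h3.trans h3k.symm) (h3.trans h3k.symm) (by omega)
      · -- S13: (k+2) + (k-1)·2 = 3k, all colored Δ 2
        have e1 : Δ (k+2) = Δ 2 := schur_fin2 _ _ _ (fun h => h2 h.symm) hK2
        have e2 : Δ (3*k) = Δ 2 := schur_fin2 _ _ _ (fun h => h2 h.symm) h3k
        exact schur_aux k 1 0 (k+2) 2 2 (3*k) Δ _ (by omega) (by simp) (by simp) (by simp)
          (by simp) (e1.trans e2.symm) e2.symm e2.symm (by omega)
    · -- 3 colored like 2
      have e3 : Δ 3 = Δ 2 := schur_fin2 _ _ _ (fun h => h2 h.symm) h3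
      by_cases h3k : Δ (3*k) = Δ 2
      · -- S4: k·3 = 3k
        exact schur_aux k 0 0 3 3 3 (3*k) Δ _ (by omega) (by simp) (by simp) (by simp) (by simp)
          (e3.trans h3k.symm) (e3.trans h3k.symm) (e3.trans h3k.symm) (by omega)
      by_cases h21 : Δ (2*(k+1)) = Δ 2
      · -- S9: 2·3 + (k-2)·2 = 2(k+1)
        exact schur_aux k 2 0 3 2 2 (2*(k+1)) Δ _ (by omega) (by simp) (by simp) (by simp)
          (by simp) (e3.trans h21.symm) h21.symm h21.symm (by omega)
      by_cases hq1 : Δ (2*k*(k+1)) = Δ (2*(k+1))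
      · -- S7: k·2(k+1) = 2k(k+1)
        refine schur_aux k 0 0 (2*(k+1)) (2*(k+1)) (2*(k+1)) (2*k*(k+1)) Δ _ (by omega)
          (by simp) (by simp) (by simp) (by simp) hq1.symm hq1.symm hq1.symm ?_
        simp; ring
      by_cases h22 : Δ (2*(k+2)) = Δ 2
      · -- S10: 4·3 + (k-4)·2 = 2(k+2)
        exact schur_aux k 4 0 3 2 2 (2*(k+2)) Δ _ (by omega) (by simp) (by simp) (by simp)
          (by simp) (e3.trans h22.symm) h22.symm h22.symm (by omega)
      by_cases hq2 : Δ (2*k*(k+2)) = Δ (2*(k+2))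
      · -- S8: k·2(k+2) = 2k(k+2)
        refine schur_aux k 0 0 (2*(k+2)) (2*(k+2)) (2*(k+2)) (2*k*(k+2)) Δ _ (by omega)
          (by simp) (by simp) (by simp) (by simp) hq2.symm hq2.symm hq2.symm ?_
        simp; ring
      · -- S14: 2k(k+1) + 2·3 + (k-3)·2 = 2k(k+2), all colored Δ 2
        have e21 : Δ (2*(k+1)) = Δ 1 := schur_fin2 _ _ _ h2 h21
        have e22 : Δ (2*(k+2)) = Δ 1 := schur_fin2 _ _ _ h2 h22
        have f1 : Δ (2*k*(k+1)) = Δ 2 := by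
          refine schur_fin2 _ _ _ (fun h => h2 h.symm) ?_
          intro h; exact hq1 (h.trans e21.symm)
        have f2 : Δ (2*k*(k+2)) = Δ 2 := by
          refine schur_fin2 _ _ _ (fun h => h2 h.symm) ?_
          intro h; exact hq2 (h.trans e22.symm)
        refine schur_aux k 1 2 (2*k*(k+1)) 3 2 (2*k*(k+2)) Δ _ (by omega) (by simp) (by simp)
          (by simp) (by simp) (f1.trans f2.symm) (e3.trans f2.symm) f2.symm ?_
        obtain ⟨m, rfl⟩ : ∃ m, k = m + 3 := ⟨k - 3, by omega⟩
        simp [Nat.add_sub_cancel]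
        ring
end

section
/- For every even integer k ≥ 4, every 2-coloring of the set A = {1, 2, 3, k+1, k+2, 2k, 2(k+1), 2(k+2), k(k+1), k(k+2), 2k(k+1), 2k(k+2)} admits a monochromatic solution to x₁ + x₂ + ⋯ + x_k = y. -/
lemma sum_three (k m₁ m₂ : ℕ) (h : m₁ + m₂ ≤ k) (a b c : ℕ) :
    (∑ i : Fin k, if (i : ℕ) < m₁ then a else if (i : ℕ) < m₁ + m₂ then b else c)
      = m₁ * a + m₂ * b + (k - m₁ - m₂) * c := by
  rw [Fin.sum_univ_eq_sum_range (fun i => if i < m₁ then a else if i < m₁ + m₂ then b else c)]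
  rw [Finset.range_eq_Ico,
      ← Finset.sum_Ico_consecutive _ (Nat.zero_le (m₁ + m₂)) h,
      ← Finset.sum_Ico_consecutive _ (Nat.zero_le m₁) (Nat.le_add_right m₁ m₂)]
  have h1 : ∑ i ∈ Finset.Ico 0 m₁,
      (if i < m₁ then a else if i < m₁ + m₂ then b else c) = m₁ * a := by
    rw [Finset.sum_congr rfl (fun i hi => if_pos (Finset.mem_Ico.mp hi).2)]
    simp [mul_comm]
  have h2 : ∑ i ∈ Finset.Ico m₁ (m₁ + m₂),
      (if i < m₁ then a else if i < m₁ + m₂ then b else c) = m₂ * b := by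
    rw [Finset.sum_congr rfl (fun i hi => by
      obtain ⟨hi1, hi2⟩ := Finset.mem_Ico.mp hi
      rw [if_neg (by omega), if_pos hi2])]
    simp [mul_comm]
  have h3 : ∑ i ∈ Finset.Ico (m₁ + m₂) k,
      (if i < m₁ then a else if i < m₁ + m₂ then b else c) = (k - m₁ - m₂) * c := by
    rw [Finset.sum_congr rfl (fun i hi => by
      obtain ⟨hi1, hi2⟩ := Finset.mem_Ico.mp hi
      rw [if_neg (by omega), if_neg (by omega)])]
    simp [mul_comm, Nat.sub_sub]
  rw [h1, h2, h3]

set_option synthInstance.maxSize 4000 in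
set_option synthInstance.maxHeartbeats 1000000 in
set_option maxRecDepth 20000 in
set_option maxHeartbeats 1000000 in
lemma key_colors (c0 c1 c2 c3 c4 c5 c7 c8 c9 c10 c11 : Fin 2) :
    (c1 = c5) ∨
    (c0 = c3 ∧ c1 = c3) ∨
    (c1 = c7 ∧ c2 = c7) ∨
    (c0 = c5 ∧ c2 = c5) ∨
    (c3 = c8) ∨
    (c4 = c9) ∨
    (c7 = c11) ∨
    (c5 = c10 ∧ c7 = c10) ∨
    (c1 = c8 ∧ c4 = c8) ∨
    (c0 = c9 ∧ c1 = c9 ∧ c8 = c9) ∨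
    (c1 = c11 ∧ c2 = c11 ∧ c10 = c11) := by
  revert c0 c1 c2 c3 c4 c5 c7 c8 c9 c10 c11
  decide

lemma build (k : ℕ) (Δ : ℕ → Fin 2) (S : Finset ℕ) (m₁ m₂ : ℕ) (h : m₁ + m₂ ≤ k)
    (a b c y : ℕ) (ha : a ∈ S) (hb : b ∈ S) (hc : c ∈ S) (hy : y ∈ S)
    (da : Δ a = Δ y) (db : Δ b = Δ y) (dc : Δ c = Δ y)
    (hsum : m₁ * a + m₂ * b + (k - m₁ - m₂) * c = y) :
    ∃ (x : Fin k → ℕ) (y' : ℕ),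
      (∀ i, x i ∈ S) ∧ y' ∈ S ∧ (∀ i, Δ (x i) = Δ y') ∧ ∑ i, x i = y' := by
  refine ⟨fun i => if (i : ℕ) < m₁ then a else if (i : ℕ) < m₁ + m₂ then b else c,
    y, ?_, hy, ?_, ?_⟩
  · intro i; dsimp only; split_ifs <;> assumption
  · intro i; dsimp only; split_ifs <;> assumption
  · rw [sum_three k m₁ m₂ h a b c]; exact hsum

set_option maxHeartbeats 4000000 in
theorem stmt_1 (k : ℕ) (hk : 4 ≤ k) (hke : Even k) (Δ : ℕ → Fin 2) :
    ∃ (x : Fin k → ℕ) (y : ℕ),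
      (∀ i, x i ∈ ({1, 2, 3, k+1, k+2, 2*k, 2*(k+1), 2*(k+2),
        k*(k+1), k*(k+2), 2*k*(k+1), 2*k*(k+2)} : Finset ℕ)) ∧
      y ∈ ({1, 2, 3, k+1, k+2, 2*k, 2*(k+1), 2*(k+2),
        k*(k+1), k*(k+2), 2*k*(k+1), 2*k*(k+2)} : Finset ℕ) ∧
      (∀ i, Δ (x i) = Δ y) ∧ ∑ i, x i = y := by
  obtain ⟨r, hr⟩ := hke
  obtain ⟨n, rfl⟩ : ∃ n, k = 2*n+4 := ⟨r - 2, by omega⟩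
  set S : Finset ℕ := {1, 2, 3, 2*n+4+1, 2*n+4+2, 2*(2*n+4), 2*(2*n+4+1), 2*(2*n+4+2),
    (2*n+4)*(2*n+4+1), (2*n+4)*(2*n+4+2), 2*(2*n+4)*(2*n+4+1), 2*(2*n+4)*(2*n+4+2)} with hS
  have m0 : (1:ℕ) ∈ S := by simp [hS]
  have m1 : (2:ℕ) ∈ S := by simp [hS]
  have m2 : (3:ℕ) ∈ S := by simp [hS]
  have m3 : 2*n+4+1 ∈ S := by simp [hS]
  have m4 : 2*n+4+2 ∈ S := by simp [hS]
  have m5 : 2*(2*n+4) ∈ S := by simp [hS]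
  have m7 : 2*(2*n+4+2) ∈ S := by simp [hS]
  have m8 : (2*n+4)*(2*n+4+1) ∈ S := by simp [hS]
  have m9 : (2*n+4)*(2*n+4+2) ∈ S := by simp [hS]
  have m10 : 2*(2*n+4)*(2*n+4+1) ∈ S := by simp [hS]
  have m11 : 2*(2*n+4)*(2*n+4+2) ∈ S := by simp [hS]
  rcases key_colors (Δ 1) (Δ 2) (Δ 3) (Δ (2*n+4+1)) (Δ (2*n+4+2)) (Δ (2*(2*n+4)))
      (Δ (2*(2*n+4+2))) (Δ ((2*n+4)*(2*n+4+1))) (Δ ((2*n+4)*(2*n+4+2)))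
      (Δ (2*(2*n+4)*(2*n+4+1))) (Δ (2*(2*n+4)*(2*n+4+2))) with
    h | h | h | h | h | h | h | h | h | h | h
  -- E1 : k × 2 = 2k
  · exact build _ Δ _ (2*n+4) 0 (by omega) 2 2 2 (2*(2*n+4))
      m1 m1 m1 m5 h h h
      (by rw [show 2*n+4 - (2*n+4) - 0 = 0 from by omega]; ring)
  -- E2 : (k-1) × 1 + 2 = k+1
  · exact build _ Δ _ (2*n+3) 1 (by omega) 1 2 2 (2*n+4+1)
      m0 m1 m1 m3 h.1 h.2 h.2
      (by rw [show 2*n+4 - (2*n+3) - 1 = 0 from by omega]; ring)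
  -- E3 : (k-4) × 2 + 4 × 3 = 2(k+2)
  · exact build _ Δ _ (2*n) 4 (by omega) 2 3 3 (2*(2*n+4+2))
      m1 m2 m2 m7 h.1 h.2 h.2
      (by rw [show 2*n+4 - (2*n) - 4 = 0 from by omega]; ring)
  -- E4 : (k/2) × 1 + (k/2) × 3 = 2k
  · exact build _ Δ _ (n+2) (n+2) (by omega) 1 3 3 (2*(2*n+4))
      m0 m2 m2 m5 h.1 h.2 h.2
      (by rw [show 2*n+4 - (n+2) - (n+2) = 0 from by omega]; ring)
  -- E5 : k × (k+1) = k(k+1)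
  · exact build _ Δ _ (2*n+4) 0 (by omega) (2*n+4+1) (2*n+4+1) (2*n+4+1)
      ((2*n+4)*(2*n+4+1)) m3 m3 m3 m8 h h h
      (by rw [show 2*n+4 - (2*n+4) - 0 = 0 from by omega]; ring)
  -- E6 : k × (k+2) = k(k+2)
  · exact build _ Δ _ (2*n+4) 0 (by omega) (2*n+4+2) (2*n+4+2) (2*n+4+2)
      ((2*n+4)*(2*n+4+2)) m4 m4 m4 m9 h h h
      (by rw [show 2*n+4 - (2*n+4) - 0 = 0 from by omega]; ring)
  -- E7 : k × 2(k+2) = 2k(k+2)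
  · exact build _ Δ _ (2*n+4) 0 (by omega) (2*(2*n+4+2)) (2*(2*n+4+2)) (2*(2*n+4+2))
      (2*(2*n+4)*(2*n+4+2)) m7 m7 m7 m11 h h h
      (by rw [show 2*n+4 - (2*n+4) - 0 = 0 from by omega]; ring)
  -- E8 : (k/2) × 2k + (k/2) × 2(k+2) = 2k(k+1)
  · exact build _ Δ _ (n+2) (n+2) (by omega) (2*(2*n+4)) (2*(2*n+4+2)) (2*(2*n+4+2))
      (2*(2*n+4)*(2*n+4+1)) m5 m7 m7 m10 h.1 h.2 h.2
      (by rw [show 2*n+4 - (n+2) - (n+2) = 0 from by omega]; ring)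
  -- E9 : 1 × 2 + (k-1) × (k+2) = k(k+1)
  · exact build _ Δ _ 1 (2*n+3) (by omega) 2 (2*n+4+2) (2*n+4+2)
      ((2*n+4)*(2*n+4+1)) m1 m4 m4 m8 h.1 h.2 h.2
      (by rw [show 2*n+4 - 1 - (2*n+3) = 0 from by omega]; ring)
  -- E10 : (k-2) × 1 + 1 × 2 + 1 × k(k+1) = k(k+2)
  · exact build _ Δ _ (2*n+2) 1 (by omega) 1 2 ((2*n+4)*(2*n+4+1))
      ((2*n+4)*(2*n+4+2)) m0 m1 m8 m9 h.1 h.2.1 h.2.2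
      (by rw [show 2*n+4 - (2*n+2) - 1 = 1 from by omega]; ring)
  -- E11 : (k-3) × 2 + 2 × 3 + 1 × 2k(k+1) = 2k(k+2)
  · exact build _ Δ _ (2*n+1) 2 (by omega) 2 3 (2*(2*n+4)*(2*n+4+1))
      (2*(2*n+4)*(2*n+4+2)) m1 m2 m10 m11 h.1 h.2.1 h.2.2
      (by rw [show 2*n+4 - (2*n+1) - 2 = 1 from by omega]; ring)
end

section
/- Let r, k ≥ 2 be integers, let A be a finite nonempty subset of ℕ (of positive integers), and let L be the least common multiple of the elements of A. Suppose every r-coloring of A has a monochromatic solution to x₁ + ⋯ + x_k = y. Then every r-coloring of {1, 2, …, L} has a monochromatic solution to 1/x₁ + ⋯ + 1/x_k = 1/y with x₁, …, x_k, y ∈ {1, …, L}. -/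
theorem stmt_2 (r k : ℕ) (hr : 2 ≤ r) (hk : 2 ≤ k)
    (A : Finset ℕ) (hA : A.Nonempty) (hpos : ∀ a ∈ A, 0 < a)
    (L : ℕ) (hL : L = A.lcm id)
    (hlin : ∀ Δ : ℕ → Fin r, ∃ (x : Fin k → ℕ) (y : ℕ),
      (∀ i, x i ∈ A) ∧ y ∈ A ∧ (∀ i, Δ (x i) = Δ y) ∧ ∑ i, x i = y) :
    ∀ Δ : ℕ → Fin r, ∃ (x : Fin k → ℕ) (y : ℕ),
      (∀ i, x i ∈ Finset.Icc 1 L) ∧ y ∈ Finset.Icc 1 L ∧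
      (∀ i, Δ (x i) = Δ y) ∧ ∑ i, ((x i : ℚ))⁻¹ = ((y : ℚ))⁻¹ := by
  intro Δ
  have hLpos : 0 < L := by
    rw [hL]
    rcases hA with ⟨a, ha⟩
    have hdvd : a ∣ A.lcm id := Finset.dvd_lcm ha
    rcases Nat.eq_zero_or_pos (A.lcm id) with h0 | h
    · exfalso
      have := Finset.lcm_eq_zero_iff (s := A) (f := id) |>.mp h0
      simp only [Set.mem_image, id] at this
      obtain ⟨b, hb, hb0⟩ := this
      exact (hpos b hb).ne' hb0
    · exact h
  have hdvd : ∀ a ∈ A, a ∣ L := fun a ha => hL ▸ Finset.dvd_lcm ha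
  obtain ⟨x, y, hx, hy, hcol, hsum⟩ := hlin (fun a => Δ (L / a))
  have mem : ∀ a ∈ A, L / a ∈ Finset.Icc 1 L := by
    intro a ha
    have hapos := hpos a ha
    have h1 : 1 ≤ L / a := Nat.one_le_div_iff hapos |>.mpr (Nat.le_of_dvd hLpos (hdvd a ha))
    exact Finset.mem_Icc.mpr ⟨h1, Nat.div_le_self L a⟩
  have key : ∀ a ∈ A, ((L / a : ℕ) : ℚ)⁻¹ = (a : ℚ) / (L : ℚ) := by
    intro a ha
    have : ((L / a : ℕ) : ℚ) = (L : ℚ) / (a : ℚ) := by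
      rw [Nat.cast_div (hdvd a ha)]
      exact_mod_cast (hpos a ha).ne'
    rw [this, inv_div]
  refine ⟨fun i => L / x i, L / y, fun i => mem _ (hx i), mem _ hy, hcol, ?_⟩
  have : ∑ i, ((L / x i : ℕ) : ℚ)⁻¹ = ∑ i, ((x i : ℚ) / (L : ℚ)) := by
    exact Finset.sum_congr rfl fun i _ => key _ (hx i)
  rw [this, key _ hy, ← Finset.sum_div]
  congr 1
  exact_mod_cast hsum
end

section
/- For all integers k, r ≥ 2, there exists an r-coloring of {1, 2, …, k^r − 1} with no monochromatic solution to 1/x₁ + ⋯ + 1/x_k = 1/y. Hence f_r(k) ≥ k^r. -/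
/-!
Colour `x` by `⌊log_k x⌋`; below `k^r` this takes fewer than `r` values. If `x₁, …, x_k, y` all
lie in `[k^i, k^(i+1))`, then each `1/x_j > 1/k^(i+1)`, so `∑ 1/x_j > k / k^(i+1) = 1/k^i ≥ 1/y`.
-/

/-- The reduction mod `r` only makes the colouring `Fin r`-valued; it is the identity below `k^r`. -/
def logColoring (k r : ℕ) (hr : 0 < r) (x : ℕ) : Fin r :=
  ⟨Nat.log k x % r, Nat.mod_lt _ hr⟩

theorem log_eq_of_logColoring_eq {k r x y : ℕ} (hr : 0 < r) (hx : x < k ^ r) (hy : y < k ^ r)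
    (h : logColoring k r hr x = logColoring k r hr y) : Nat.log k x = Nat.log k y := by
  have hxr := Nat.log_lt_of_lt_pow' hr.ne' hx
  have hyr := Nat.log_lt_of_lt_pow' hr.ne' hy
  simpa only [logColoring, Fin.mk.injEq, Nat.mod_eq_of_lt hxr, Nat.mod_eq_of_lt hyr] using h

theorem inv_pow_lt_sum_inv_of_lt_pow_succ {k i : ℕ} (hk : 0 < k) {x : Fin k → ℕ}
    (hx₀ : ∀ j, 0 < x j) (hx : ∀ j, x j < k ^ (i + 1)) :
    ((k : ℚ) ^ i)⁻¹ < ∑ j, ((x j : ℚ))⁻¹ := by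
  have : Nonempty (Fin k) := ⟨⟨0, hk⟩⟩
  calc ((k : ℚ) ^ i)⁻¹ = ∑ _j : Fin k, ((k : ℚ) ^ (i + 1))⁻¹ := by
        rw [Finset.sum_const, Finset.card_univ, Fintype.card_fin, nsmul_eq_mul]
        field_simp
        ring
    _ < ∑ j, ((x j : ℚ))⁻¹ := by
        refine Finset.sum_lt_sum_of_nonempty Finset.univ_nonempty fun j _ => ?_
        exact inv_strictAnti₀ (by exact_mod_cast hx₀ j) (by exact_mod_cast hx j)

theorem sum_inv_ne_inv_of_log_eq {k y : ℕ} (hk : 1 < k) {x : Fin k → ℕ}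
    (hx₀ : ∀ j, 0 < x j) (hy₀ : 0 < y) (hlog : ∀ j, Nat.log k (x j) = Nat.log k y) :
    ∑ j, ((x j : ℚ))⁻¹ ≠ ((y : ℚ))⁻¹ := by
  have hx : ∀ j, x j < k ^ (Nat.log k y + 1) := fun j =>
    hlog j ▸ Nat.lt_pow_succ_log_self hk (x j)
  have hy : ((k : ℚ) ^ Nat.log k y) ≤ y := by exact_mod_cast Nat.pow_log_le_self k hy₀.ne'
  have hk₀ : (0 : ℚ) < k := by exact_mod_cast hk.le
  refine (lt_of_le_of_lt ?_ (inv_pow_lt_sum_inv_of_lt_pow_succ (by omega) hx₀ hx)).ne'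
  exact inv_anti₀ (pow_pos hk₀ _) hy

theorem stmt_9 (k r : ℕ) (hk : 2 ≤ k) (hr : 2 ≤ r) :
    ∃ Δ : ℕ → Fin r, ¬ ∃ (x : Fin k → ℕ) (y : ℕ),
      (∀ i, x i ∈ Finset.Icc 1 (k^r - 1)) ∧ y ∈ Finset.Icc 1 (k^r - 1) ∧
      (∀ i, Δ (x i) = Δ y) ∧ ∑ i, ((x i : ℚ))⁻¹ = ((y : ℚ))⁻¹ := by
  have hr₀ : 0 < r := by omega
  refine ⟨logColoring k r hr₀, ?_⟩
  rintro ⟨x, y, hx, hy, hcol, hsum⟩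
  simp only [Finset.mem_Icc] at hx hy
  have hkr : 0 < k ^ r := Nat.pow_pos (by omega)
  refine sum_inv_ne_inv_of_log_eq hk (fun j => (hx j).1) hy.1 (fun j => ?_) hsum
  exact log_eq_of_logColoring_eq hr₀ (by have := hx j; omega) (by omega) (hcol j)
end
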